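/- Let c = [a,b] and let G'×G' denote the set {⟨g,h⟩ : g, h ∈ [G,G]}. Then G'×G' is a subgroup of [G,G], it is normal in [G,G], every element of [G,G] can be written as an element of G'×G' times a power of c, and cᵏ ∈ G'×G' holds only for k = 0; consequently the quotient [G,G]/(G'×G') is infinite cyclic, generated by the image of c. -/

import Mathlib

-- The generators `a` and `b` of the iterated monodromy group of `z^2-1`,
-- as functions on binary words (`false` = x = left, `true` = y = right),
-- defined by mutual recursion.
mutual
def aFun : List Bool → List Bool
  | [] => []
  | false :: w => true :: bFun w
  | true :: w => false :: w

def bFun : List Bool → List Bool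
  | [] => []
  | false :: w => false :: aFun w
  | true :: w => true :: w
end

-- The inverses of `aFun`/`bFun`.
mutual
def aInv : List Bool → List Bool
  | [] => []
  | true :: w => false :: bInv w
  | false :: w => true :: w

def bInv : List Bool → List Bool
  | [] => []
  | false :: w => false :: aInv w
  | true :: w => true :: w
end

mutual
theorem aFun_aInv : ∀ w, aFun (aInv w) = w
  | [] => rfl
  | true :: w => by simp [aInv, aFun, bFun_bInv w]
  | false :: w => by simp [aInv, aFun]

theorem bFun_bInv : ∀ w, bFun (bInv w) = w
  | [] => rfl
  | false :: w => by simp [bInv, bFun, aFun_aInv w]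
  | true :: w => by simp [bInv, bFun]
end

mutual
theorem aInv_aFun : ∀ w, aInv (aFun w) = w
  | [] => rfl
  | false :: w => by simp [aFun, aInv, bInv_bFun w]
  | true :: w => by simp [aFun, aInv]

theorem bInv_bFun : ∀ w, bInv (bFun w) = w
  | [] => rfl
  | false :: w => by simp [bFun, bInv, aInv_aFun w]
  | true :: w => by simp [bFun, bInv]
end

/-- `a` as a permutation of the set of binary words. -/
def aPerm : Equiv.Perm (List Bool) := ⟨aFun, aInv, aInv_aFun, aFun_aInv⟩
/-- `b` as a permutation of the set of binary words. -/
def bPerm : Equiv.Perm (List Bool) := ⟨bFun, bInv, bInv_bFun, bFun_bInv⟩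

mutual
theorem aFun_length : ∀ w, (aFun w).length = w.length
  | [] => rfl
  | false :: w => by simp [aFun, bFun_length w]
  | true :: w => by simp [aFun]

theorem bFun_length : ∀ w, (bFun w).length = w.length
  | [] => rfl
  | false :: w => by simp [bFun, aFun_length w]
  | true :: w => by simp [bFun]
end

mutual
theorem aFun_prefix : ∀ u v, u <+: v → aFun u <+: aFun v
  | [], v, _ => by simp [aFun]
  | false :: u, false :: v, h => by
      simp only [List.cons_prefix_cons] at h
      simpa [aFun, List.cons_prefix_cons] using bFun_prefix u v h.2
  | true :: u, true :: v, h => by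
      simp only [List.cons_prefix_cons] at h
      simpa [aFun, List.cons_prefix_cons] using h.2
  | false :: u, true :: v, h => by simp [List.cons_prefix_cons] at h
  | true :: u, false :: v, h => by simp [List.cons_prefix_cons] at h
  | _ :: u, [], h => by simp at h

theorem bFun_prefix : ∀ u v, u <+: v → bFun u <+: bFun v
  | [], v, _ => by simp [bFun]
  | false :: u, false :: v, h => by
      simp only [List.cons_prefix_cons] at h
      simpa [bFun, List.cons_prefix_cons] using aFun_prefix u v h.2
  | true :: u, true :: v, h => by
      simp only [List.cons_prefix_cons] at h
      simpa [bFun, List.cons_prefix_cons] using h.2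
  | false :: u, true :: v, h => by simp [List.cons_prefix_cons] at h
  | true :: u, false :: v, h => by simp [List.cons_prefix_cons] at h
  | _ :: u, [], h => by simp at h
end

/-- The group of automorphisms of the binary rooted tree: bijections of the set of
binary words preserving word length and the prefix relation. -/
def treeAut : Subgroup (Equiv.Perm (List Bool)) where
  carrier := {f | (∀ w, (f w).length = w.length) ∧ ∀ u v : List Bool, u <+: v → f u <+: f v}
  one_mem' := ⟨fun _ => rfl, fun _ _ h => h⟩
  mul_mem' := by
    rintro f g ⟨hf1, hf2⟩ ⟨hg1, hg2⟩
    exact ⟨fun w => (hf1 _).trans (hg1 w), fun u v h => hf2 _ _ (hg2 _ _ h)⟩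
  inv_mem' := by
    rintro f ⟨hf1, hf2⟩
    constructor
    · intro w
      have := hf1 (f⁻¹ w)
      simpa using this.symm
    · intro u v h
      have hlen : (f⁻¹ u).length ≤ (f⁻¹ v).length := by
        have h1 : (f⁻¹ u).length = u.length := by have := hf1 (f⁻¹ u); simpa using this.symm
        have h2 : (f⁻¹ v).length = v.length := by have := hf1 (f⁻¹ v); simpa using this.symm
        rw [h1, h2]; exact h.length_le
      set p := (f⁻¹ v).take (f⁻¹ u).length with hp
      have hpv : p <+: f⁻¹ v := List.take_prefix _ _
      have hplen : p.length = (f⁻¹ u).length := by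
        rw [hp, List.length_take]; exact Nat.min_eq_left hlen
      have hfp : f p <+: v := by
        have := hf2 _ _ hpv
        simpa using this
      have hfplen : (f p).length = u.length := by
        rw [hf1 p, hplen]
        have := hf1 (f⁻¹ u); simpa using this.symm
      have : f p = u := by
        rcases List.prefix_or_prefix_of_prefix hfp h with h' | h'
        · exact h'.eq_of_length hfplen
        · exact (h'.eq_of_length hfplen.symm).symm
      have : p = f⁻¹ u := by
        have := congrArg (f⁻¹ : Equiv.Perm (List Bool)) this
        simpa using this
      rw [← this]; exact hpv

/-- The generator `a` as a tree automorphism. -/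
def A : treeAut := ⟨aPerm, aFun_length, aFun_prefix⟩
/-- The generator `b` as a tree automorphism. -/
def B : treeAut := ⟨bPerm, bFun_length, bFun_prefix⟩

/-- The iterated monodromy group of `z ↦ z² - 1`: the subgroup of the automorphism
group of the binary rooted tree generated by `a` and `b`. -/
def G : Subgroup treeAut := Subgroup.closure {A, B}

/-- Apply a tree automorphism to a binary word. -/
def app (g : treeAut) (w : List Bool) : List Bool := g.val w

theorem app_inv_app (g : treeAut) (w : List Bool) : app g⁻¹ (app g w) = w := by
  show (g.val)⁻¹.toFun (g.val.toFun w) = w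
  simp

theorem app_app_inv (g : treeAut) (w : List Bool) : app g (app g⁻¹ w) = w := by
  show g.val.toFun ((g.val)⁻¹.toFun w) = w
  simp

/-- `⟨f, g⟩` on words: acts by `f` on the subtree below `x = false` and by `g`
on the subtree below `y = true`. -/
def pairFun (f g : List Bool → List Bool) : List Bool → List Bool
  | [] => []
  | false :: w => false :: f w
  | true :: w => true :: g w

/-- The tree automorphism `⟨g, h⟩` acting as `g` on the left subtree
and as `h` on the right subtree. -/
def pairAut (g h : treeAut) : treeAut := by
  refine ⟨⟨pairFun (app g) (app h), pairFun (app g⁻¹) (app h⁻¹), ?_, ?_⟩, ?_, ?_⟩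
  · intro w
    match w with
    | [] => rfl
    | false :: w => simp [pairFun, app_inv_app]
    | true :: w => simp [pairFun, app_inv_app]
  · intro w
    match w with
    | [] => rfl
    | false :: w => simp [pairFun, app_app_inv]
    | true :: w => simp [pairFun, app_app_inv]
  · intro w
    match w with
    | [] => rfl
    | false :: w => simpa [pairFun, app] using g.2.1 w
    | true :: w => simpa [pairFun, app] using h.2.1 w
  · intro u v huv
    match u, v, huv with
    | [], v, _ => exact List.nil_prefix
    | false :: u, false :: v, h' =>
        simp only [List.cons_prefix_cons] at h'
        show pairFun (app g) (app h) (false :: u) <+: pairFun (app g) (app h) (false :: v)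
        simpa [pairFun, app, List.cons_prefix_cons] using g.2.2 u v h'.2
    | true :: u, true :: v, h' =>
        simp only [List.cons_prefix_cons] at h'
        show pairFun (app g) (app h) (true :: u) <+: pairFun (app g) (app h) (true :: v)
        simpa [pairFun, app, List.cons_prefix_cons] using h.2.2 u v h'.2
    | false :: u, true :: v, h' => simp [List.cons_prefix_cons] at h'
    | true :: u, false :: v, h' => simp [List.cons_prefix_cons] at h'
    | _ :: u, [], h' => simp at h'

/-- `c = [a,b] = a⁻¹b⁻¹ab`. -/
def cElt : treeAut := A⁻¹ * B⁻¹ * A * B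

/-- The set `G' × G' = {⟨g,h⟩ : g, h ∈ [G,G]}`. -/
def GpGp : Set treeAut :=
  {p | ∃ g h : treeAut, g ∈ ⁅G, G⁆ ∧ h ∈ ⁅G, G⁆ ∧ p = pairAut g h}

open scoped commutatorElement

/-! ### Auxiliary development -/

theorem treeAut_ext {g h : treeAut} (H : ∀ w, app g w = app h w) : g = h :=
  Subtype.ext (Equiv.ext H)

theorem app_mul (g h : treeAut) (w : List Bool) : app (g * h) w = app g (app h w) := rfl

theorem app_one' (w : List Bool) : app 1 w = w := rfl

theorem app_pair (g h : treeAut) (w : List Bool) :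
    app (pairAut g h) w = pairFun (app g) (app h) w := rfl

theorem app_A (w : List Bool) : app A w = aFun w := rfl
theorem app_B (w : List Bool) : app B w = bFun w := rfl
theorem app_Ainv (w : List Bool) : app A⁻¹ w = aInv w := rfl
theorem app_Binv (w : List Bool) : app B⁻¹ w = bInv w := rfl

theorem pairAut_mul (g h g' h' : treeAut) :
    pairAut g h * pairAut g' h' = pairAut (g * g') (h * h') := by
  apply treeAut_ext; intro w
  match w with
  | [] => rfl
  | false :: w => simp [app_mul, app_pair, pairFun]
  | true :: w => simp [app_mul, app_pair, pairFun]

theorem pairAut_one : pairAut 1 1 = 1 := by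
  apply treeAut_ext; intro w
  match w with
  | [] => rfl
  | false :: w => simp [app_pair, pairFun, app_one']
  | true :: w => simp [app_pair, pairFun, app_one']

/-- `⟨·,·⟩` as a group homomorphism `Aut(T) × Aut(T) → Aut(T)`. -/
def pairHom : treeAut × treeAut →* treeAut where
  toFun p := pairAut p.1 p.2
  map_one' := pairAut_one
  map_mul' p q := (pairAut_mul p.1 p.2 q.1 q.2).symm

theorem pairAut_inv (g h : treeAut) : (pairAut g h)⁻¹ = pairAut g⁻¹ h⁻¹ :=
  (map_inv pairHom (g, h)).symm

theorem pairAut_zpow (g h : treeAut) (k : ℤ) :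
    (pairAut g h) ^ k = pairAut (g ^ k) (h ^ k) :=
  (map_zpow pairHom (g, h) k).symm

theorem B_eq : B = pairAut A 1 := by
  apply treeAut_ext; intro w
  match w with
  | [] => rfl
  | false :: w => simp [app_pair, pairFun, app_B, app_A, bFun, app_one']
  | true :: w => simp [app_pair, pairFun, app_B, bFun, app_one']

theorem A_pair (g h : treeAut) :
    A * pairAut g h = pairAut h (B * g * B⁻¹) * A := by
  apply treeAut_ext; intro w
  match w with
  | [] => rfl
  | false :: w =>
      simp [app_mul, app_pair, pairFun, app_A, app_B, app_Binv, aFun, bInv_bFun]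
  | true :: w =>
      simp [app_mul, app_pair, pairFun, app_A, aFun]

theorem conjA_pair (g h : treeAut) :
    A * pairAut g h * A⁻¹ = pairAut h (B * g * B⁻¹) := by
  rw [A_pair]; group

theorem conjAinv_pair (g h : treeAut) :
    A⁻¹ * pairAut g h * A = pairAut (B⁻¹ * h * B) g := by
  have h1 := A_pair (B⁻¹ * h * B) g
  have h2 : B * (B⁻¹ * h * B) * B⁻¹ = h := by group
  rw [h2] at h1
  calc A⁻¹ * pairAut g h * A = A⁻¹ * (pairAut g h * A) := by group
    _ = A⁻¹ * (A * pairAut (B⁻¹ * h * B) g) := by rw [← h1]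
    _ = pairAut (B⁻¹ * h * B) g := by group

theorem conjB_pair (g h : treeAut) :
    B * pairAut g h * B⁻¹ = pairAut (A * g * A⁻¹) h := by
  conv_lhs => rw [B_eq]
  calc pairAut A 1 * pairAut g h * (pairAut A 1)⁻¹
      = pairAut A 1 * pairAut g h * pairAut A⁻¹ 1⁻¹ := by rw [pairAut_inv]
    _ = pairAut (A * g * A⁻¹) (1 * h * 1⁻¹) := by rw [pairAut_mul, pairAut_mul]
    _ = pairAut (A * g * A⁻¹) h := by congr 1

theorem conjBinv_pair (g h : treeAut) :
    B⁻¹ * pairAut g h * B = pairAut (A⁻¹ * g * A) h := by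
  conv_lhs => rw [B_eq]
  calc (pairAut A 1)⁻¹ * pairAut g h * pairAut A 1
      = pairAut A⁻¹ 1⁻¹ * pairAut g h * pairAut A 1 := by rw [pairAut_inv]
    _ = pairAut (A⁻¹ * g * A) (1⁻¹ * h * 1) := by rw [pairAut_mul, pairAut_mul]
    _ = pairAut (A⁻¹ * g * A) h := by congr 1

theorem A_sq : A * A = pairAut B B := by
  apply treeAut_ext; intro w
  match w with
  | [] => rfl
  | false :: w => simp [app_mul, app_pair, pairFun, app_A, app_B, aFun]
  | true :: w => simp [app_mul, app_pair, pairFun, app_A, app_B, aFun]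

theorem AinvBA : A⁻¹ * B * A = pairAut 1 A := by
  conv_lhs => rw [B_eq]
  rw [conjAinv_pair]
  congr 1; group

theorem c_pair : cElt = pairAut A A⁻¹ := by
  have h1 : cElt = (A⁻¹ * B * A)⁻¹ * B := by unfold cElt; group
  rw [h1, AinvBA]
  conv_lhs => rw [B_eq]
  rw [pairAut_inv, pairAut_mul]
  congr 1 <;> group

theorem A_mem : A ∈ G := Subgroup.subset_closure (by simp)
theorem B_mem : B ∈ G := Subgroup.subset_closure (by simp)

theorem commG_le_G : ⁅G, G⁆ ≤ G := by
  rw [Subgroup.commutator_le]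
  intro g hg h hh
  rw [commutatorElement_def]
  exact mul_mem (mul_mem (mul_mem hg hh) (inv_mem hg)) (inv_mem hh)

theorem conj_commG {g u : treeAut} (hg : g ∈ G) (hu : u ∈ ⁅G, G⁆) :
    g * u * g⁻¹ ∈ ⁅G, G⁆ := by
  rw [Subgroup.commutator_def] at hu
  induction hu using Subgroup.closure_induction with
  | mem x hx =>
      obtain ⟨x₁, h₁, x₂, h₂, rfl⟩ := hx
      have e : g * ⁅x₁, x₂⁆ * g⁻¹ = ⁅g * x₁ * g⁻¹, g * x₂ * g⁻¹⁆ := by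
        rw [commutatorElement_def, commutatorElement_def]; group
      rw [e]
      have m₁ : g * x₁ * g⁻¹ ∈ G := mul_mem (mul_mem hg h₁) (inv_mem hg)
      have m₂ : g * x₂ * g⁻¹ ∈ G := mul_mem (mul_mem hg h₂) (inv_mem hg)
      exact Subgroup.commutator_mem_commutator m₁ m₂
  | one =>
      have e : g * 1 * g⁻¹ = 1 := by group
      rw [e]; exact one_mem _
  | mul x y hx hy ihx ihy =>
      have e : g * (x * y) * g⁻¹ = g * x * g⁻¹ * (g * y * g⁻¹) := by group
      rw [e]; exact mul_mem ihx ihy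
  | inv x hx ihx =>
      have e : g * x⁻¹ * g⁻¹ = (g * x * g⁻¹)⁻¹ := by group
      rw [e]; exact inv_mem ihx

theorem Ggood {x : treeAut} (hx : x ∈ G) :
    ∃ y, y ∈ G ∧ pairAut x y ∈ G ∧ pairAut y x ∈ G := by
  have hx' : x ∈ Subgroup.closure {A, B} := hx
  clear hx
  induction hx' using Subgroup.closure_induction with
  | mem z hz =>
      rcases (by simpa using hz : z = A ∨ z = B) with rfl | rfl
      · refine ⟨1, one_mem _, ?_, ?_⟩
        · rw [← B_eq]; exact B_mem
        · rw [← AinvBA]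
          exact mul_mem (mul_mem (inv_mem A_mem) B_mem) A_mem
      · exact ⟨B, B_mem, by rw [← A_sq]; exact mul_mem A_mem A_mem,
          by rw [← A_sq]; exact mul_mem A_mem A_mem⟩
  | one => exact ⟨1, one_mem _, by rw [pairAut_one]; exact one_mem _,
      by rw [pairAut_one]; exact one_mem _⟩
  | mul x y hx hy ihx ihy =>
      obtain ⟨y₁, hy₁, h₁₁, h₁₂⟩ := ihx
      obtain ⟨y₂, hy₂, h₂₁, h₂₂⟩ := ihy
      exact ⟨y₁ * y₂, mul_mem hy₁ hy₂,
        by rw [← pairAut_mul]; exact mul_mem h₁₁ h₂₁,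
        by rw [← pairAut_mul]; exact mul_mem h₁₂ h₂₂⟩
  | inv x hx ih =>
      obtain ⟨y, hy, h₁, h₂⟩ := ih
      exact ⟨y⁻¹, inv_mem hy, by rw [← pairAut_inv]; exact inv_mem h₁,
        by rw [← pairAut_inv]; exact inv_mem h₂⟩

theorem pairAinv_one : pairAut A⁻¹ 1 = B⁻¹ := by
  rw [B_eq, pairAut_inv, inv_one]

theorem pairBinv_Binv : pairAut B⁻¹ B⁻¹ = (A * A)⁻¹ := by
  rw [A_sq, pairAut_inv]

theorem pair_one_Ainv : pairAut 1 A⁻¹ = (A⁻¹ * B * A)⁻¹ := by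
  rw [AinvBA, pairAut_inv, inv_one]

theorem pair_c_one_mem : pairAut cElt 1 ∈ ⁅G, G⁆ := by
  have e : ⁅pairAut A⁻¹ 1, pairAut B⁻¹ B⁻¹⁆ = pairAut cElt 1 := by
    rw [commutatorElement_def, pairAut_inv, pairAut_inv,
      pairAut_mul, pairAut_mul, pairAut_mul]
    unfold cElt
    congr 1 <;> group
  have m₁ : pairAut A⁻¹ 1 ∈ G := by rw [pairAinv_one]; exact inv_mem B_mem
  have m₂ : pairAut B⁻¹ B⁻¹ ∈ G := by
    rw [pairBinv_Binv]; exact inv_mem (mul_mem A_mem A_mem)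
  exact e ▸ Subgroup.commutator_mem_commutator m₁ m₂

theorem pair_one_c_mem : pairAut 1 cElt ∈ ⁅G, G⁆ := by
  have e : ⁅pairAut 1 A⁻¹, pairAut B⁻¹ B⁻¹⁆ = pairAut 1 cElt := by
    rw [commutatorElement_def, pairAut_inv, pairAut_inv,
      pairAut_mul, pairAut_mul, pairAut_mul]
    unfold cElt
    congr 1 <;> group
  have m₁ : pairAut 1 A⁻¹ ∈ G := by
    rw [pair_one_Ainv]
    exact inv_mem (mul_mem (mul_mem (inv_mem A_mem) B_mem) A_mem)
  have m₂ : pairAut B⁻¹ B⁻¹ ∈ G := by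
    rw [pairBinv_Binv]; exact inv_mem (mul_mem A_mem A_mem)
  exact e ▸ Subgroup.commutator_mem_commutator m₁ m₂

/-- The normal closure of `c` in `G`. -/
def Nc : Subgroup treeAut :=
  Subgroup.closure {w | ∃ g, g ∈ G ∧ w = g * cElt * g⁻¹}

theorem conj_Nc {g u : treeAut} (hg : g ∈ G) (hu : u ∈ Nc) : g * u * g⁻¹ ∈ Nc := by
  have hu' : u ∈ Subgroup.closure {w | ∃ g, g ∈ G ∧ w = g * cElt * g⁻¹} := hu
  clear hu
  induction hu' using Subgroup.closure_induction with
  | mem x hx =>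
      obtain ⟨z, hz, rfl⟩ := hx
      have e : g * (z * cElt * z⁻¹) * g⁻¹ = g * z * cElt * (g * z)⁻¹ := by group
      rw [e]
      exact Subgroup.subset_closure ⟨g * z, mul_mem hg hz, rfl⟩
  | one =>
      have e : g * 1 * g⁻¹ = 1 := by group
      rw [e]; exact one_mem _
  | mul x y hx hy ihx ihy =>
      have e : g * (x * y) * g⁻¹ = g * x * g⁻¹ * (g * y * g⁻¹) := by group
      rw [e]; exact mul_mem ihx ihy
  | inv x hx ihx =>
      have e : g * x⁻¹ * g⁻¹ = (g * x * g⁻¹)⁻¹ := by group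
      rw [e]; exact inv_mem ihx

theorem keyInduction (T : Subgroup treeAut) (hc : cElt ∈ T)
    (hconj : ∀ x, (x = A ∨ x = B) → ∀ s ∈ T, x * s * x⁻¹ ∈ T ∧ x⁻¹ * s * x ∈ T) :
    ⁅G, G⁆ ≤ T := by
  have conjT : ∀ g, g ∈ G → ∀ s ∈ T, g * s * g⁻¹ ∈ T ∧ g⁻¹ * s * g ∈ T := by
    intro g hg
    have hg' : g ∈ Subgroup.closure {A, B} := hg
    clear hg
    induction hg' using Subgroup.closure_induction with
    | mem x hx => exact hconj x (by simpa using hx)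
    | one =>
        intro s hs
        constructor
        · have e : (1 : treeAut) * s * 1⁻¹ = s := by group
          rw [e]; exact hs
        · have e : (1 : treeAut)⁻¹ * s * 1 = s := by group
          rw [e]; exact hs
    | mul x y hx hy ihx ihy =>
        intro s hs
        constructor
        · have e : x * y * s * (x * y)⁻¹ = x * (y * s * y⁻¹) * x⁻¹ := by group
          rw [e]; exact (ihx _ (ihy s hs).1).1
        · have e : (x * y)⁻¹ * s * (x * y) = y⁻¹ * (x⁻¹ * s * x) * y := by group
          rw [e]; exact (ihy _ (ihx s hs).2).2
    | inv x hx ih =>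
        intro s hs
        constructor
        · have e : x⁻¹ * s * x⁻¹⁻¹ = x⁻¹ * s * x := by group
          rw [e]; exact (ih s hs).2
        · have e : x⁻¹⁻¹ * s * x⁻¹ = x * s * x⁻¹ := by group
          rw [e]; exact (ih s hs).1
  have inner : ∀ g, g ∈ G → ⁅g, A⁆ ∈ T → ⁅g, B⁆ ∈ T → ∀ h, h ∈ G → ⁅g, h⁆ ∈ T := by
    intro g hgG hA hB h hh
    have hh' : h ∈ Subgroup.closure {A, B} := hh
    clear hh
    induction hh' using Subgroup.closure_induction with
    | mem x hx =>
        rcases (by simpa using hx : x = A ∨ x = B) with rfl | rfl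
        · exact hA
        · exact hB
    | one =>
        have e : ⁅g, (1 : treeAut)⁆ = 1 := by rw [commutatorElement_def]; group
        rw [e]; exact one_mem _
    | mul x y hx hy ihx ihy =>
        have e : ⁅g, x * y⁆ = ⁅g, x⁆ * (x * ⁅g, y⁆ * x⁻¹) := by
          simp only [commutatorElement_def]; group
        rw [e]; exact mul_mem ihx (conjT x hx _ ihy).1
    | inv x hx ihx =>
        have e : ⁅g, x⁻¹⁆ = x⁻¹ * ⁅g, x⁆⁻¹ * x := by
          simp only [commutatorElement_def]; group
        rw [e]; exact (conjT x hx _ (inv_mem ihx)).2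
  have hABT : ⁅A, B⁆ ∈ T := by
    have e : ⁅A, B⁆ = A * (B * cElt * B⁻¹) * A⁻¹ := by
      rw [commutatorElement_def]; unfold cElt; group
    rw [e]
    exact (conjT A A_mem _ (conjT B B_mem _ hc).1).1
  have outer : ∀ g, g ∈ G → ∀ h, h ∈ G → ⁅g, h⁆ ∈ T := by
    intro g hg
    have hg' : g ∈ Subgroup.closure {A, B} := hg
    clear hg
    induction hg' using Subgroup.closure_induction with
    | mem x hx =>
        rcases (by simpa using hx : x = A ∨ x = B) with rfl | rfl
        · refine inner A A_mem ?_ ?_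
          · rw [commutatorElement_self]; exact one_mem _
          · exact hABT
        · refine inner B B_mem ?_ ?_
          · have e : ⁅A, B⁆⁻¹ = ⁅B, A⁆ := commutatorElement_inv A B
            rw [← e]; exact inv_mem hABT
          · rw [commutatorElement_self]; exact one_mem _
    | one =>
        intro h hh
        have e : ⁅(1 : treeAut), h⁆ = 1 := by rw [commutatorElement_def]; group
        rw [e]; exact one_mem _
    | mul x y hx hy ihx ihy =>
        intro h hh
        have e : ⁅x * y, h⁆ = x * ⁅y, h⁆ * x⁻¹ * ⁅x, h⁆ := by
          simp only [commutatorElement_def]; group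
        rw [e]; exact mul_mem (conjT x hx _ (ihy h hh)).1 (ihx h hh)
    | inv x hx ihx =>
        intro h hh
        have e : ⁅x⁻¹, h⁆ = x⁻¹ * ⁅x, h⁆⁻¹ * x := by
          simp only [commutatorElement_def]; group
        rw [e]; exact (conjT x hx _ (inv_mem (ihx h hh))).2
  exact Subgroup.commutator_le.mpr outer

theorem commG_le_Nc : ⁅G, G⁆ ≤ Nc := by
  apply keyInduction
  · exact Subgroup.subset_closure ⟨1, one_mem _, by group⟩
  · intro x hx s hs
    have hxG : x ∈ G := by rcases hx with rfl | rfl; exact A_mem; exact B_mem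
    refine ⟨conj_Nc hxG hs, ?_⟩
    have := conj_Nc (inv_mem hxG) hs
    rwa [inv_inv] at this

theorem pairNc {u : treeAut} (hu : u ∈ Nc) :
    pairAut u 1 ∈ ⁅G, G⁆ ∧ pairAut 1 u ∈ ⁅G, G⁆ := by
  have hu' : u ∈ Subgroup.closure {w | ∃ g, g ∈ G ∧ w = g * cElt * g⁻¹} := hu
  clear hu
  induction hu' using Subgroup.closure_induction with
  | mem x hx =>
      obtain ⟨g, hg, rfl⟩ := hx
      obtain ⟨y, hyG, hgy, hyg⟩ := Ggood hg
      constructor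
      · have e : pairAut (g * cElt * g⁻¹) 1
            = pairAut g y * pairAut cElt 1 * (pairAut g y)⁻¹ := by
          rw [pairAut_inv, pairAut_mul, pairAut_mul]; congr 1; group
        rw [e]; exact conj_commG hgy pair_c_one_mem
      · have e : pairAut 1 (g * cElt * g⁻¹)
            = pairAut y g * pairAut 1 cElt * (pairAut y g)⁻¹ := by
          rw [pairAut_inv, pairAut_mul, pairAut_mul]; congr 1; group
        rw [e]; exact conj_commG hyg pair_one_c_mem
  | one =>
      constructor <;> (rw [pairAut_one]; exact one_mem _)
  | mul x y hx hy ihx ihy =>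
      constructor
      · have e : pairAut (x * y) 1 = pairAut x 1 * pairAut y 1 := by
          rw [pairAut_mul, one_mul]
        rw [e]; exact mul_mem ihx.1 ihy.1
      · have e : pairAut 1 (x * y) = pairAut 1 x * pairAut 1 y := by
          rw [pairAut_mul, one_mul]
        rw [e]; exact mul_mem ihx.2 ihy.2
  | inv x hx ih =>
      constructor
      · have e : pairAut x⁻¹ 1 = (pairAut x 1)⁻¹ := by rw [pairAut_inv, inv_one]
        rw [e]; exact inv_mem ih.1
      · have e : pairAut 1 x⁻¹ = (pairAut 1 x)⁻¹ := by rw [pairAut_inv, inv_one]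
        rw [e]; exact inv_mem ih.2

theorem pairGG {u v : treeAut} (hu : u ∈ ⁅G, G⁆) (hv : v ∈ ⁅G, G⁆) :
    pairAut u v ∈ ⁅G, G⁆ := by
  have h1 := (pairNc (commG_le_Nc hu)).1
  have h2 := (pairNc (commG_le_Nc hv)).2
  have e : pairAut u v = pairAut u 1 * pairAut 1 v := by
    rw [pairAut_mul, mul_one, one_mul]
  rw [e]; exact mul_mem h1 h2

theorem conj_GpGp {g : treeAut} (hg : g ∈ G) :
    ∀ p ∈ GpGp, g * p * g⁻¹ ∈ GpGp ∧ g⁻¹ * p * g ∈ GpGp := by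
  have hg' : g ∈ Subgroup.closure {A, B} := hg
  clear hg
  induction hg' using Subgroup.closure_induction with
  | mem x hx =>
      rintro p ⟨u, v, hu, hv, rfl⟩
      rcases (by simpa using hx : x = A ∨ x = B) with rfl | rfl
      · constructor
        · exact ⟨v, B * u * B⁻¹, hv, conj_commG B_mem hu, conjA_pair u v⟩
        · refine ⟨B⁻¹ * v * B, u, ?_, hu, conjAinv_pair u v⟩
          have := conj_commG (inv_mem B_mem) hv
          rwa [inv_inv] at this
      · constructor
        · exact ⟨A * u * A⁻¹, v, conj_commG A_mem hu, hv, conjB_pair u v⟩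
        · refine ⟨A⁻¹ * u * A, v, ?_, hv, conjBinv_pair u v⟩
          have := conj_commG (inv_mem A_mem) hu
          rwa [inv_inv] at this
  | one =>
      intro p hp
      constructor
      · have e : (1 : treeAut) * p * 1⁻¹ = p := by group
        rw [e]; exact hp
      · have e : (1 : treeAut)⁻¹ * p * 1 = p := by group
        rw [e]; exact hp
  | mul x y hx hy ihx ihy =>
      intro p hp
      constructor
      · have e : x * y * p * (x * y)⁻¹ = x * (y * p * y⁻¹) * x⁻¹ := by group
        rw [e]; exact (ihx _ (ihy p hp).1).1
      · have e : (x * y)⁻¹ * p * (x * y) = y⁻¹ * (x⁻¹ * p * x) * y := by group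
        rw [e]; exact (ihy _ (ihx p hp).2).2
  | inv x hx ih =>
      intro p hp
      constructor
      · have e : x⁻¹ * p * x⁻¹⁻¹ = x⁻¹ * p * x := by group
        rw [e]; exact (ih p hp).2
      · have e : x⁻¹⁻¹ * p * x⁻¹ = x * p * x⁻¹ := by group
        rw [e]; exact (ih p hp).1

theorem czpow (k : ℤ) : cElt ^ k = pairAut (A ^ k) (A ^ (-k)) := by
  rw [c_pair, pairAut_zpow]
  congr 1
  rw [inv_zpow, ← zpow_neg]

theorem c_shift (k : ℤ) (u v : treeAut) :
    cElt ^ k * pairAut u v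
      = pairAut (A ^ k * u * A ^ (-k)) (A ^ (-k) * v * A ^ k) * cElt ^ k := by
  rw [czpow, pairAut_mul, pairAut_mul]
  congr 1 <;> group

/-- The subgroup `(G' × G') ⋊ ⟨c⟩`. -/
def Sgrp : Subgroup treeAut where
  carrier := {x | ∃ u v, u ∈ ⁅G, G⁆ ∧ v ∈ ⁅G, G⁆ ∧ ∃ k : ℤ, x = pairAut u v * cElt ^ k}
  one_mem' := ⟨1, 1, one_mem _, one_mem _, 0, by rw [pairAut_one, zpow_zero, mul_one]⟩
  mul_mem' := by
    rintro x y ⟨u₁, v₁, hu₁, hv₁, k₁, rfl⟩ ⟨u₂, v₂, hu₂, hv₂, k₂, rfl⟩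
    refine ⟨u₁ * (A ^ k₁ * u₂ * A ^ (-k₁)), v₁ * (A ^ (-k₁) * v₂ * A ^ k₁),
      ?_, ?_, k₁ + k₂, ?_⟩
    · refine mul_mem hu₁ ?_
      have := conj_commG (Subgroup.zpow_mem G A_mem k₁) hu₂
      rwa [← zpow_neg] at this
    · refine mul_mem hv₁ ?_
      have := conj_commG (Subgroup.zpow_mem G A_mem (-k₁)) hv₂
      rwa [← zpow_neg, neg_neg] at this
    · calc pairAut u₁ v₁ * cElt ^ k₁ * (pairAut u₂ v₂ * cElt ^ k₂)
          = pairAut u₁ v₁ * (cElt ^ k₁ * pairAut u₂ v₂) * cElt ^ k₂ := by group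
        _ = pairAut u₁ v₁ * (pairAut (A ^ k₁ * u₂ * A ^ (-k₁)) (A ^ (-k₁) * v₂ * A ^ k₁)
              * cElt ^ k₁) * cElt ^ k₂ := by rw [c_shift]
        _ = pairAut u₁ v₁ * pairAut (A ^ k₁ * u₂ * A ^ (-k₁)) (A ^ (-k₁) * v₂ * A ^ k₁)
              * (cElt ^ k₁ * cElt ^ k₂) := by group
        _ = pairAut (u₁ * (A ^ k₁ * u₂ * A ^ (-k₁))) (v₁ * (A ^ (-k₁) * v₂ * A ^ k₁))
              * cElt ^ (k₁ + k₂) := by rw [pairAut_mul, ← zpow_add]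
  inv_mem' := by
    rintro x ⟨u, v, hu, hv, k, rfl⟩
    refine ⟨A ^ (-k) * u⁻¹ * A ^ k, A ^ k * v⁻¹ * A ^ (-k), ?_, ?_, -k, ?_⟩
    · have := conj_commG (Subgroup.zpow_mem G A_mem (-k)) (inv_mem hu)
      rwa [← zpow_neg, neg_neg] at this
    · have := conj_commG (Subgroup.zpow_mem G A_mem k) (inv_mem hv)
      rwa [← zpow_neg] at this
    · calc (pairAut u v * cElt ^ k)⁻¹
          = cElt ^ (-k) * (pairAut u v)⁻¹ := by group
        _ = cElt ^ (-k) * pairAut u⁻¹ v⁻¹ := by rw [pairAut_inv]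
        _ = pairAut (A ^ (-k) * u⁻¹ * A ^ (-(-k))) (A ^ (-(-k)) * v⁻¹ * A ^ (-k))
              * cElt ^ (-k) := by rw [c_shift]
        _ = pairAut (A ^ (-k) * u⁻¹ * A ^ k) (A ^ k * v⁻¹ * A ^ (-k)) * cElt ^ (-k) := by
              rw [neg_neg]

theorem AcA (k : ℤ) : A * cElt ^ k * A⁻¹ = pairAut (A ^ (-k)) (B * A ^ k * B⁻¹) := by
  calc A * cElt ^ k * A⁻¹ = (A * cElt * A⁻¹) ^ k := by rw [conj_zpow]
    _ = (pairAut A⁻¹ (B * A * B⁻¹)) ^ k := by rw [c_pair, conjA_pair]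
    _ = pairAut ((A⁻¹) ^ k) ((B * A * B⁻¹) ^ k) := pairAut_zpow _ _ k
    _ = pairAut (A ^ (-k)) (B * A ^ k * B⁻¹) := by
        rw [conj_zpow, inv_zpow, ← zpow_neg]

theorem AinvcA (k : ℤ) : A⁻¹ * cElt ^ k * A = pairAut (B⁻¹ * A ^ (-k) * B) (A ^ k) := by
  have h0 : A⁻¹ * cElt * A⁻¹⁻¹ = pairAut (B⁻¹ * A⁻¹ * B) A := by
    rw [inv_inv, c_pair, conjAinv_pair]
  calc A⁻¹ * cElt ^ k * A = (A⁻¹ * cElt * A⁻¹⁻¹) ^ k := by rw [conj_zpow, inv_inv]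
    _ = (pairAut (B⁻¹ * A⁻¹ * B) A) ^ k := by rw [h0]
    _ = pairAut ((B⁻¹ * A⁻¹ * B) ^ k) (A ^ k) := pairAut_zpow _ _ k
    _ = pairAut (B⁻¹ * A ^ (-k) * B) (A ^ k) := by
        have e : B⁻¹ * A⁻¹ * B = B⁻¹ * A⁻¹ * B⁻¹⁻¹ := by rw [inv_inv]
        rw [e, conj_zpow, inv_inv, inv_zpow, ← zpow_neg]

theorem BcB (k : ℤ) : B * cElt ^ k * B⁻¹ = cElt ^ k := by
  have h0 : B * cElt * B⁻¹ = cElt := by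
    rw [c_pair, conjB_pair]; congr 1; group
  calc B * cElt ^ k * B⁻¹ = (B * cElt * B⁻¹) ^ k := by rw [conj_zpow]
    _ = cElt ^ k := by rw [h0]

theorem BinvcB (k : ℤ) : B⁻¹ * cElt ^ k * B = cElt ^ k := by
  have h0 : B⁻¹ * cElt * B⁻¹⁻¹ = cElt := by
    rw [inv_inv, c_pair, conjBinv_pair]; congr 1; group
  calc B⁻¹ * cElt ^ k * B = (B⁻¹ * cElt * B⁻¹⁻¹) ^ k := by rw [conj_zpow, inv_inv]
    _ = cElt ^ k := by rw [h0]

theorem commG_le_S : ⁅G, G⁆ ≤ Sgrp := by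
  apply keyInduction
  · exact ⟨1, 1, one_mem _, one_mem _, 1, by rw [pairAut_one, one_mul, zpow_one]⟩
  · rintro x hx s ⟨u, v, hu, hv, k, rfl⟩
    have hBAk : B * A ^ k * B⁻¹ * A ^ (-k) ∈ ⁅G, G⁆ := by
      have e : ⁅B, A ^ k⁆ = B * A ^ k * B⁻¹ * A ^ (-k) := by
        rw [commutatorElement_def]; group
      rw [← e]
      exact Subgroup.commutator_mem_commutator B_mem (Subgroup.zpow_mem G A_mem k)
    have hBAk' : B⁻¹ * A ^ (-k) * B * A ^ k ∈ ⁅G, G⁆ := by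
      have e : ⁅B⁻¹, A ^ (-k)⁆ = B⁻¹ * A ^ (-k) * B * A ^ k := by
        rw [commutatorElement_def]; group
      rw [← e]
      exact Subgroup.commutator_mem_commutator (inv_mem B_mem)
        (Subgroup.zpow_mem G A_mem (-k))
    rcases hx with rfl | rfl
    · constructor
      · refine ⟨v, B * u * B⁻¹ * (B * A ^ k * B⁻¹ * A ^ (-k)), hv,
          mul_mem (conj_commG B_mem hu) hBAk, -k, ?_⟩
        calc A * (pairAut u v * cElt ^ k) * A⁻¹
            = A * pairAut u v * A⁻¹ * (A * cElt ^ k * A⁻¹) := by group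
          _ = pairAut v (B * u * B⁻¹) * pairAut (A ^ (-k)) (B * A ^ k * B⁻¹) := by
              rw [conjA_pair, AcA]
          _ = pairAut (v * A ^ (-k)) (B * u * B⁻¹ * (B * A ^ k * B⁻¹)) := by
              rw [pairAut_mul]
          _ = pairAut v (B * u * B⁻¹ * (B * A ^ k * B⁻¹ * A ^ (-k))) * cElt ^ (-k) := by
              rw [czpow, neg_neg, pairAut_mul]; congr 1 <;> group
      · refine ⟨B⁻¹ * v * B * (B⁻¹ * A ^ (-k) * B * A ^ k), u,
          mul_mem (by have := conj_commG (inv_mem B_mem) hv; rwa [inv_inv] at this) hBAk',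
          hu, -k, ?_⟩
        calc A⁻¹ * (pairAut u v * cElt ^ k) * A
            = A⁻¹ * pairAut u v * A * (A⁻¹ * cElt ^ k * A) := by group
          _ = pairAut (B⁻¹ * v * B) u * pairAut (B⁻¹ * A ^ (-k) * B) (A ^ k) := by
              rw [conjAinv_pair, AinvcA]
          _ = pairAut (B⁻¹ * v * B * (B⁻¹ * A ^ (-k) * B)) (u * A ^ k) := by
              rw [pairAut_mul]
          _ = pairAut (B⁻¹ * v * B * (B⁻¹ * A ^ (-k) * B * A ^ k)) u * cElt ^ (-k) := by
              rw [czpow, neg_neg, pairAut_mul]; congr 1 <;> group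
    · constructor
      · refine ⟨A * u * A⁻¹, v, conj_commG A_mem hu, hv, k, ?_⟩
        calc B * (pairAut u v * cElt ^ k) * B⁻¹
            = B * pairAut u v * B⁻¹ * (B * cElt ^ k * B⁻¹) := by group
          _ = pairAut (A * u * A⁻¹) v * cElt ^ k := by rw [conjB_pair, BcB]
      · refine ⟨A⁻¹ * u * A, v,
          (by have := conj_commG (inv_mem A_mem) hu; rwa [inv_inv] at this), hv, k, ?_⟩
        calc B⁻¹ * (pairAut u v * cElt ^ k) * B
            = B⁻¹ * pairAut u v * B * (B⁻¹ * cElt ^ k * B) := by group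
          _ = pairAut (A⁻¹ * u * A) v * cElt ^ k := by rw [conjBinv_pair, BinvcB]

/- ### The level-one activity homomorphism -/

theorem eq_headI_of_length_one {l : List Bool} (h : l.length = 1) : l = [l.headI] := by
  match l with
  | [] => simp at h
  | [x] => rfl
  | x :: y :: t => simp at h

theorem app_singleton (g : treeAut) (i : Bool) : app g [i] = [(app g [i]).headI] :=
  eq_headI_of_length_one (g.2.1 [i])

/-- The action on the first level of the tree. -/
def lvl1 : treeAut →* Equiv.Perm Bool where
  toFun g :=
    { toFun := fun i => (app g [i]).headI
      invFun := fun i => (app g⁻¹ [i]).headI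
      left_inv := by
        intro i
        show (app g⁻¹ [(app g [i]).headI]).headI = i
        rw [← app_singleton g i, app_inv_app]
        rfl
      right_inv := by
        intro i
        show (app g [(app g⁻¹ [i]).headI]).headI = i
        rw [← app_singleton g⁻¹ i, app_app_inv]
        rfl }
  map_one' := by
    apply Equiv.ext; intro i; rfl
  map_mul' g h := by
    apply Equiv.ext; intro i
    show (app (g * h) [i]).headI = (app g [(app h [i]).headI]).headI
    rw [← app_singleton h i]
    rfl

/-- The sign of the action at the root. -/
def sgn : treeAut →* ℤˣ := Equiv.Perm.sign.comp lvl1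

theorem lvl1_A : lvl1 A = Equiv.swap false true := by
  apply Equiv.ext; intro i
  cases i
  · show (app A [false]).headI = _
    rw [show app A [false] = [true] from by simp [app_A, aFun, bFun]]
    simp
  · show (app A [true]).headI = _
    rw [show app A [true] = [false] from by simp [app_A, aFun]]
    simp [Equiv.swap_apply_def]

theorem lvl1_B : lvl1 B = 1 := by
  apply Equiv.ext; intro i
  cases i
  · show (app B [false]).headI = _
    rw [show app B [false] = [false] from by simp [app_B, bFun, aFun]]
    rfl
  · show (app B [true]).headI = _
    rw [show app B [true] = [true] from by simp [app_B, bFun]]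
    rfl

theorem sgn_A : sgn A = -1 := by
  show Equiv.Perm.sign (lvl1 A) = -1
  rw [lvl1_A, Equiv.Perm.sign_swap (by decide)]

theorem sgn_B : sgn B = 1 := by
  show Equiv.Perm.sign (lvl1 B) = 1
  rw [lvl1_B, map_one]

theorem sgn_commG {u : treeAut} (hu : u ∈ ⁅G, G⁆) : sgn u = 1 := by
  rw [Subgroup.commutator_def] at hu
  induction hu using Subgroup.closure_induction with
  | mem x hx =>
      obtain ⟨x₁, _, x₂, _, rfl⟩ := hx
      rw [map_commutatorElement]
      exact commutatorElement_eq_one_iff_commute.mpr (Commute.all _ _)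
  | one => exact map_one sgn
  | mul x y hx hy ihx ihy => rw [map_mul, ihx, ihy, one_mul]
  | inv x hx ihx => rw [map_inv, ihx, inv_one]

theorem pair_inj {u v u' v' : treeAut} (h : pairAut u v = pairAut u' v') :
    u = u' ∧ v = v' := by
  constructor
  · apply treeAut_ext; intro w
    have := congrArg (fun z => app z (false :: w)) h
    simpa [app_pair, pairFun] using this
  · apply treeAut_ext; intro w
    have := congrArg (fun z => app z (true :: w)) h
    simpa [app_pair, pairFun] using this

theorem B_zpow (n : ℤ) : B ^ n = pairAut (A ^ n) 1 := by
  rw [B_eq, pairAut_zpow, one_zpow]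

theorem A_two_zpow (m : ℤ) : A ^ (2 * m) = pairAut (B ^ m) (B ^ m) := by
  rw [zpow_mul, show A ^ (2 : ℤ) = pairAut B B from by rw [zpow_two, A_sq], pairAut_zpow]

theorem even_of_mem {m n : ℤ} (h : A ^ m * B ^ n ∈ ⁅G, G⁆) : Even m := by
  have h1 : sgn (A ^ m * B ^ n) = 1 := sgn_commG h
  rw [map_mul, map_zpow, map_zpow, sgn_A, sgn_B, one_zpow, mul_one] at h1
  by_contra hc
  rw [Int.not_even_iff_odd] at hc
  obtain ⟨q, rfl⟩ := hc
  have h2 : ((-1 : ℤˣ)) ^ (2 * q + 1 : ℤ) = -1 := by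
    rw [zpow_add, zpow_mul, zpow_one,
      show ((-1 : ℤˣ)) ^ (2 : ℤ) = 1 from by rw [zpow_two]; decide, one_zpow, one_mul]
  rw [h2] at h1
  exact absurd h1 (by decide)

theorem descent {m n : ℤ} (h : A ^ m * B ^ n ∈ ⁅G, G⁆) :
    ∃ m' j : ℤ, m = 2 * m' ∧ A ^ j * B ^ m' ∈ ⁅G, G⁆ ∧ A ^ (n - j) * B ^ m' ∈ ⁅G, G⁆ := by
  obtain ⟨m', hm'⟩ := even_of_mem h
  have hm : m = 2 * m' := by omega
  obtain ⟨u, v, hu, hv, k, heq⟩ := commG_le_S h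
  rw [show A ^ m * B ^ n = pairAut (B ^ m' * A ^ n) (B ^ m') from by
    rw [hm, A_two_zpow, B_zpow n, pairAut_mul, mul_one], czpow, pairAut_mul] at heq
  obtain ⟨h1, h2⟩ := pair_inj heq
  refine ⟨m', k, hm, ?_, ?_⟩
  · have hv' : v = B ^ m' * A ^ k := by
      calc v = v * A ^ (-k) * A ^ k := by group
        _ = B ^ m' * A ^ k := by rw [← h2]
    have e : A ^ k * B ^ m' = v * ⁅A ^ (-k), B ^ (-m')⁆ := by
      rw [hv', commutatorElement_def]; group
    rw [e]
    exact mul_mem hv (Subgroup.commutator_mem_commutator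
      (Subgroup.zpow_mem G A_mem (-k)) (Subgroup.zpow_mem G B_mem (-m')))
  · have hu' : u = B ^ m' * A ^ (n - k) := by
      calc u = u * A ^ k * A ^ (-k) := by group
        _ = B ^ m' * A ^ n * A ^ (-k) := by rw [← h1]
        _ = B ^ m' * A ^ (n - k) := by group
    have e : A ^ (n - k) * B ^ m' = u * ⁅A ^ (-(n - k)), B ^ (-m')⁆ := by
      rw [hu', commutatorElement_def]; group
    rw [e]
    exact mul_mem hu (Subgroup.commutator_mem_commutator
      (Subgroup.zpow_mem G A_mem (-(n - k))) (Subgroup.zpow_mem G B_mem (-m')))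

theorem swapL {m n : ℤ} (h : A ^ m * B ^ n ∈ ⁅G, G⁆) : A ^ n * B ^ m ∈ ⁅G, G⁆ := by
  obtain ⟨m', j, hm, h1, h2⟩ := descent h
  have e : A ^ n * B ^ m
      = A ^ (n - j) * B ^ m' * (B ^ (-m') * (A ^ j * B ^ m') * B ^ m') := by
    rw [hm]; group
  rw [e]
  refine mul_mem h2 ?_
  have := conj_commG (Subgroup.zpow_mem G B_mem (-m')) h1
  rwa [← zpow_neg, neg_neg] at this

theorem dyadic : ∀ r : ℕ, ∀ m n : ℤ, A ^ m * B ^ n ∈ ⁅G, G⁆ → (2 : ℤ) ^ r ∣ m := by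
  intro r
  induction r with
  | zero => intro m n _; simpa using one_dvd m
  | succ r ih =>
      intro m n h
      obtain ⟨m', j, hm, h1, _⟩ := descent h
      obtain ⟨t, ht⟩ := ih m' j (swapL h1)
      exact ⟨t, by rw [hm, ht]; ring⟩

theorem m_eq_zero {m n : ℤ} (h : A ^ m * B ^ n ∈ ⁅G, G⁆) : m = 0 := by
  by_contra h0
  have h1 : (2 : ℤ) ^ (|m|.toNat) ≤ |m| :=
    Int.le_of_dvd (abs_pos.mpr h0) ((dvd_abs _ _).mpr (dyadic _ m n h))
  have h2 : ((|m|.toNat : ℕ) : ℤ) = |m| := Int.toNat_of_nonneg (abs_nonneg m)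
  have h3 : ((|m|.toNat : ℕ) : ℤ) < (2 : ℤ) ^ (|m|.toNat) := by
    exact_mod_cast Nat.lt_two_pow_self
  linarith

/-- `G' × G'` is a subgroup of `[G,G]`, normal in `[G,G]`; every element
of `[G,G]` is an element of `G' × G'` times a power of `c`; and `cᵏ ∈ G' × G'` only for
`k = 0`. Hence `[G,G]/(G' × G')` is infinite cyclic, generated by the image of `c`. -/
theorem commutator_mod_product :
    (∀ p ∈ GpGp, p ∈ ⁅G, G⁆) ∧
    (1 : treeAut) ∈ GpGp ∧
    (∀ p ∈ GpGp, ∀ q ∈ GpGp, p * q ∈ GpGp) ∧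
    (∀ p ∈ GpGp, p⁻¹ ∈ GpGp) ∧
    (∀ p ∈ GpGp, ∀ g ∈ ⁅G, G⁆, g * p * g⁻¹ ∈ GpGp) ∧
    (∀ g ∈ ⁅G, G⁆, ∃ p ∈ GpGp, ∃ k : ℤ, g = p * cElt ^ k) ∧
    (∀ k : ℤ, cElt ^ k ∈ GpGp → k = 0) := by
  refine ⟨?_, ?_, ?_, ?_, ?_, ?_, ?_⟩
  · rintro p ⟨u, v, hu, hv, rfl⟩
    exact pairGG hu hv
  · exact ⟨1, 1, one_mem _, one_mem _, pairAut_one.symm⟩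
  · rintro p ⟨u₁, v₁, hu₁, hv₁, rfl⟩ q ⟨u₂, v₂, hu₂, hv₂, rfl⟩
    exact ⟨u₁ * u₂, v₁ * v₂, mul_mem hu₁ hu₂, mul_mem hv₁ hv₂,
      pairAut_mul u₁ v₁ u₂ v₂⟩
  · rintro p ⟨u, v, hu, hv, rfl⟩
    exact ⟨u⁻¹, v⁻¹, inv_mem hu, inv_mem hv, pairAut_inv u v⟩
  · intro p hp g hg
    exact (conj_GpGp (commG_le_G hg) p hp).1
  · intro g hg
    obtain ⟨u, v, hu, hv, k, heq⟩ := commG_le_S hg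
    exact ⟨pairAut u v, ⟨u, v, hu, hv, rfl⟩, k, heq⟩
  · intro k hk
    obtain ⟨u, v, hu, hv, heq⟩ := hk
    have h2 : pairAut (A ^ k) (A ^ (-k)) = pairAut u v := by
      rw [← czpow]; exact heq
    have h3 := (pair_inj h2).1
    have h4 : A ^ k * B ^ (0 : ℤ) ∈ ⁅G, G⁆ := by
      rw [zpow_zero, mul_one, h3]; exact hu
    exact m_eq_zero h4
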